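/- Proposition 1 (type-i inputs). Assume J¹ ≠ 0. Let k₁ be an integer with 2 ≤ k₁ and 2·k₁ ≤ L, and let Q be a k₁-candidate. Then the expansion coefficient c_A of Q vanishes for every (k₁,ℓ₂)-support Pauli product A of type i, for every ℓ₂ ∈ {1,...,L} and every position of its bounding box. -/

import Mathlib

/-!
Let `p` be a site of the upper edge where `A` is `X` or `Y`, let `u = p - e₁` (where `A` is
trivial) and `B = Z_u Z_p A`. Expand `0 = Tr (σ_B [Q, H])` over the terms of `H`. A term
that does not commute with `σ_B` and is not the bond `Z_u Z_p` leaves an operator that is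
still nontrivial at `u` and at a site `f` of the lower edge where `A` is `X` or `Y`; these
sites are `k₁` rows apart, so the operator does not fit in `k₁` rows and `Q` has no component
on it. The bond `Z_u Z_p` anticommutes with `σ_B` (only at `p`) and maps it back to `A`,
so what remains is `J¹ c c_A = 0` with `c ≠ 0`.
-/

open scoped Classical

namespace Ising2D

/-- Single-site Pauli operators (including the identity). -/
inductive PauliOp : Type
  | I : PauliOp
  | X : PauliOp
  | Y : PauliOp
  | Z : PauliOp
  deriving DecidableEq

/-- The 2×2 matrices of the single-site Pauli operators. -/
noncomputable def pauliMat : PauliOp → Matrix (Fin 2) (Fin 2) ℂ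
  | PauliOp.I => 1
  | PauliOp.X => !![0, 1; 1, 0]
  | PauliOp.Y => !![0, -Complex.I; Complex.I, 0]
  | PauliOp.Z => !![1, 0; 0, -1]

/-- Sites of the two-dimensional periodic lattice `Λ = (ℤ/L)²`. -/
abbrev Site (L : ℕ) := ZMod L × ZMod L

variable {L : ℕ}

/-- The matrix (on `⨂_{r ∈ Λ} ℂ²`, realized as matrices indexed by spin
configurations `Λ → Fin 2`) of the Pauli product `∏_r A_r`. -/
noncomputable def pauliProd [NeZero L] (A : Site L → PauliOp) :
    Matrix (Site L → Fin 2) (Site L → Fin 2) ℂ :=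
  fun s t => ∏ p : Site L, pauliMat (A p) (s p) (t p)

/-- The (unique) expansion coefficient of an operator `Q` on the Pauli product `A`,
obtained from the trace inner product (Pauli products form an orthogonal basis with
`Tr (P_A P_B) = 2^|Λ| δ_{A,B}`). -/
noncomputable def coeff [NeZero L] (Q : Matrix (Site L → Fin 2) (Site L → Fin 2) ℂ)
    (A : Site L → PauliOp) : ℂ :=
  Matrix.trace (pauliProd A * Q) / 2 ^ Fintype.card (Site L)

/-- The Pauli product acting as `P` at site `r` and trivially elsewhere. -/
def singleSite (r : Site L) (P : PauliOp) : Site L → PauliOp :=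
  fun p => if p = r then P else PauliOp.I

/-- The Pauli product acting as `Z` at the two sites `r, s` and trivially elsewhere. -/
def twoSiteZZ (r s : Site L) : Site L → PauliOp :=
  fun p => if p = r ∨ p = s then PauliOp.Z else PauliOp.I

/-- The Hamiltonian
`H = Σ_r (J¹ Z_r Z_{r+e₁} + J² Z_r Z_{r+e₂} + hˣ X_r + h^z Z_r)`. -/
noncomputable def ham [NeZero L] (J1 J2 hx hz : ℝ) :
    Matrix (Site L → Fin 2) (Site L → Fin 2) ℂ :=
  ∑ r : Site L,
    ((J1 : ℂ) • pauliProd (twoSiteZZ r (r.1 + 1, r.2))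
      + (J2 : ℂ) • pauliProd (twoSiteZZ r (r.1, r.2 + 1))
      + (hx : ℂ) • pauliProd (singleSite r PauliOp.X)
      + (hz : ℂ) • pauliProd (singleSite r PauliOp.Z))

/-- `A` is an `(ℓ₁,ℓ₂)`-support Pauli product with (minimal) bounding box cornered
at `r`: its support is contained in the box
`{r₁,...,r₁+ℓ₁−1} × {r₂,...,r₂+ℓ₂−1}` and it acts nontrivially at some site on each
of the four edges of the box. -/
def IsSupportedAt (A : Site L → PauliOp) (r : Site L) (ℓ₁ ℓ₂ : ℕ) : Prop :=
  (∀ p : Site L, A p ≠ PauliOp.I →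
      (∃ n : ℕ, n < ℓ₁ ∧ p.1 = r.1 + (n : ZMod L)) ∧
      (∃ n : ℕ, n < ℓ₂ ∧ p.2 = r.2 + (n : ZMod L))) ∧
  (∃ p : Site L, A p ≠ PauliOp.I ∧ p.1 = r.1) ∧
  (∃ p : Site L, A p ≠ PauliOp.I ∧ p.1 = r.1 + ((ℓ₁ - 1 : ℕ) : ZMod L)) ∧
  (∃ p : Site L, A p ≠ PauliOp.I ∧ p.2 = r.2) ∧
  (∃ p : Site L, A p ≠ PauliOp.I ∧ p.2 = r.2 + ((ℓ₂ - 1 : ℕ) : ZMod L))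

/-- `A` is an `(ℓ₁,ℓ₂)`-support Pauli product. -/
def IsSupportOp (ℓ₁ ℓ₂ : ℕ) (A : Site L → PauliOp) : Prop :=
  ∃ r : Site L, IsSupportedAt A r ℓ₁ ℓ₂

/-- `Q` is a `(k₁,k₂)`-local conserved quantity: it commutes with `H`, it is a linear
combination of `(ℓ₁,ℓ₂)`-support Pauli products with `ℓ₁ ≤ k₁`, `ℓ₂ ≤ k₂`, and the
maximal `ℓ₁` (resp. `ℓ₂`) occurring with nonzero coefficient equals `k₁` (resp. `k₂`). -/
def IsLocalConserved [NeZero L] (J1 J2 hx hz : ℝ) (k₁ k₂ : ℕ)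
    (Q : Matrix (Site L → Fin 2) (Site L → Fin 2) ℂ) : Prop :=
  Q * ham (L := L) J1 J2 hx hz = ham (L := L) J1 J2 hx hz * Q ∧
  (∀ A, coeff Q A ≠ 0 → ∃ ℓ₁ ℓ₂ : ℕ, ℓ₁ ≤ k₁ ∧ ℓ₂ ≤ k₂ ∧ IsSupportOp ℓ₁ ℓ₂ A) ∧
  (∃ A ℓ₂, coeff Q A ≠ 0 ∧ ℓ₂ ≤ k₂ ∧ IsSupportOp k₁ ℓ₂ A) ∧
  (∃ A ℓ₁, coeff Q A ≠ 0 ∧ ℓ₁ ≤ k₁ ∧ IsSupportOp ℓ₁ k₂ A)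

/-- `Q` is a `k₁`-candidate: it commutes with `H` and is a linear combination of
`(ℓ₁,ℓ₂)`-support Pauli products with `ℓ₁ ≤ k₁` (`ℓ₂ ≤ L` arbitrary). -/
def IsCandidate [NeZero L] (J1 J2 hx hz : ℝ) (k₁ : ℕ)
    (Q : Matrix (Site L → Fin 2) (Site L → Fin 2) ℂ) : Prop :=
  Q * ham (L := L) J1 J2 hx hz = ham (L := L) J1 J2 hx hz * Q ∧
  ∀ A, coeff Q A ≠ 0 → ∃ ℓ₁ ℓ₂ : ℕ, ℓ₁ ≤ k₁ ∧ ℓ₂ ≤ L ∧ IsSupportOp ℓ₁ ℓ₂ A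

/-- First coordinate of the upper edge of a box cornered at `r`. -/
def upperEdge (r : Site L) : ZMod L := r.1

/-- First coordinate of the lower edge of a box cornered at `r` with height `ℓ₁`. -/
def lowerEdge (r : Site L) (ℓ₁ : ℕ) : ZMod L := r.1 + ((ℓ₁ - 1 : ℕ) : ZMod L)

/-- `A` contains `X` or `Y` at some site with first coordinate `a`. -/
def HasXYOn (A : Site L → PauliOp) (a : ZMod L) : Prop :=
  ∃ p : Site L, p.1 = a ∧ (A p = PauliOp.X ∨ A p = PauliOp.Y)

/-- Every operator of `A` at sites with first coordinate `a` is `Z` or `I`. -/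
def AllZIOn (A : Site L → PauliOp) (a : ZMod L) : Prop :=
  ∀ p : Site L, p.1 = a → A p = PauliOp.Z ∨ A p = PauliOp.I

/-- `A` carries at least two `Z`'s on the line with first coordinate `a`. -/
def TwoZOn (A : Site L → PauliOp) (a : ZMod L) : Prop :=
  ∃ p q : Site L, p ≠ q ∧ p.1 = a ∧ q.1 = a ∧ A p = PauliOp.Z ∧ A q = PauliOp.Z

/-- `A` carries exactly one `Z` on the line with first coordinate `a`. -/
def OneZOn (A : Site L → PauliOp) (a : ZMod L) : Prop :=
  ∃! p : Site L, p.1 = a ∧ A p = PauliOp.Z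

/-- The single-column Pauli product with `P` at site `r`, `R` at site `r+(k−1)e₁`,
`X` at sites `r+n e₁` for `n = 1,...,k−2`, and `I` elsewhere. -/
noncomputable def colPQ (P R : PauliOp) (k : ℕ) (r : Site L) : Site L → PauliOp :=
  fun p =>
    if p = r then P
    else if p = (r.1 + ((k - 1 : ℕ) : ZMod L), r.2) then R
    else if ∃ n : ℕ, 1 ≤ n ∧ n ≤ k - 2 ∧ p = (r.1 + (n : ZMod L), r.2) then PauliOp.X
    else PauliOp.I

namespace PauliOp

/-- The Pauli group modulo phases. -/
instance : Mul PauliOp where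
  mul
    | I, a => a
    | a, I => a
    | X, X => I | Y, Y => I | Z, Z => I
    | X, Y => Z | Y, X => Z
    | Y, Z => X | Z, Y => X
    | Z, X => Y | X, Z => Y

/-- The phase `c` with `σ_a σ_b = c σ_{a * b}`. -/
noncomputable def phase : PauliOp → PauliOp → ℂ
  | X, Y => Complex.I | Y, Z => Complex.I | Z, X => Complex.I
  | Y, X => -Complex.I | Z, Y => -Complex.I | X, Z => -Complex.I
  | _, _ => 1

def Commutes (a b : PauliOp) : Prop := a = I ∨ b = I ∨ a = b

@[simp] lemma I_mul (a : PauliOp) : I * a = a := by cases a <;> rfl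

@[simp] lemma mul_I (a : PauliOp) : a * I = a := by cases a <;> rfl

lemma mul_comm (a b : PauliOp) : a * b = b * a := by cases a <;> cases b <;> rfl

@[simp] lemma mul_mul_cancel_left (a b : PauliOp) : a * (a * b) = b := by
  cases a <;> cases b <;> rfl

lemma mul_eq_I_iff {a b : PauliOp} : a * b = I ↔ a = b := by
  cases a <;> cases b <;> decide

lemma phase_ne_zero (a b : PauliOp) : phase a b ≠ 0 := by
  cases a <;> cases b <;> simp [phase]

lemma phase_swap (a b : PauliOp) :
    phase b a = (if a.Commutes b then 1 else -1) * phase a b := by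
  cases a <;> cases b <;> simp [phase, Commutes]

lemma commutes_of_ZI {a b : PauliOp} (ha : a = Z ∨ a = I) (hb : b = Z ∨ b = I) :
    a.Commutes b := by
  rcases ha with rfl | rfl <;> rcases hb with rfl | rfl <;> simp [Commutes]

lemma not_Z_commutes {a : PauliOp} (ha : a = X ∨ a = Y) : ¬ Z.Commutes a := by
  rcases ha with rfl | rfl <;> simp [Commutes]

end PauliOp

open PauliOp Finset

lemma pauliMat_mul (a b : PauliOp) :
    pauliMat a * pauliMat b = phase a b • pauliMat (a * b) := by
  cases a <;> cases b <;>
    · ext i j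
      fin_cases i <;> fin_cases j <;>
        simp [pauliMat, phase, Matrix.mul_apply, Fin.sum_univ_two, Matrix.one_apply]

lemma natCast_eq_natCast_of_lt {a b : ℕ} (ha : a < L) (hb : b < L)
    (h : (a : ZMod L) = b) : a = b := by
  rwa [ZMod.natCast_eq_natCast_iff', Nat.mod_eq_of_lt ha, Nat.mod_eq_of_lt hb] at h

lemma IsSupportedAt.apply_eq_I {A : Site L → PauliOp} {r : Site L} {ℓ₁ ℓ₂ m : ℕ}
    (hA : IsSupportedAt A r ℓ₁ ℓ₂) (hm : 0 < m) (hmL : ℓ₁ + m ≤ L) {q : Site L}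
    (hq : q.1 + m = r.1) : A q = I := by
  by_contra hAq
  obtain ⟨⟨n, hn, hqn⟩, -⟩ := hA.1 q hAq
  have hcast : ((n + m : ℕ) : ZMod L) = ((0 : ℕ) : ZMod L) := by
    push_cast
    linear_combination hq - hqn
  have := natCast_eq_natCast_of_lt (by omega) (by omega) hcast
  omega

lemma IsSupportedAt.fst_add_ne {C : Site L → PauliOp} {r : Site L} {ℓ₁ ℓ₂ k : ℕ}
    (hC : IsSupportedAt C r ℓ₁ ℓ₂) (hk : ℓ₁ ≤ k) (hkL : ℓ₁ + k ≤ L) {u v : Site L}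
    (hu : C u ≠ I) (hv : C v ≠ I) : u.1 + k ≠ v.1 := by
  intro huv
  obtain ⟨⟨nu, hnu, hu1⟩, -⟩ := hC.1 u hu
  obtain ⟨⟨nv, hnv, hv1⟩, -⟩ := hC.1 v hv
  have hcast : ((nu + k : ℕ) : ZMod L) = nv := by
    push_cast
    linear_combination huv - hu1 + hv1
  have := natCast_eq_natCast_of_lt (by omega) (by omega) hcast
  omega

variable [NeZero L]

lemma pauliProd_mul (A B : Site L → PauliOp) :
    pauliProd A * pauliProd B = (∏ p, phase (A p) (B p)) • pauliProd (A * B) := by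
  ext s t
  calc (pauliProd A * pauliProd B) s t
      = ∑ u : Site L → Fin 2, ∏ p, pauliMat (A p) (s p) (u p) * pauliMat (B p) (u p) (t p) := by
        simp [Matrix.mul_apply, pauliProd, Finset.prod_mul_distrib]
    _ = ∏ p, ∑ i, pauliMat (A p) (s p) i * pauliMat (B p) i (t p) :=
        (Fintype.prod_sum fun p i => pauliMat (A p) (s p) i * pauliMat (B p) i (t p)).symm
    _ = ∏ p, (phase (A p) (B p) • pauliMat (A p * B p)) (s p) (t p) := by
        simp_rw [← pauliMat_mul, Matrix.mul_apply]
    _ = _ := by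
        simp [pauliProd, Finset.prod_mul_distrib]

noncomputable def commCoef (h B : Site L → PauliOp) : ℂ :=
  (∏ p, phase (h p) (B p)) - ∏ p, phase (B p) (h p)

lemma pauliProd_commutator (h B : Site L → PauliOp) :
    pauliProd h * pauliProd B - pauliProd B * pauliProd h
      = commCoef h B • pauliProd (h * B) := by
  rw [pauliProd_mul, pauliProd_mul, commCoef, sub_smul,
    show B * h = h * B from funext fun p => PauliOp.mul_comm _ _]

/-- Two Pauli products commute or anticommute according to the parity of the number of
sites at which their letters anticommute. -/
lemma commCoef_eq (h B : Site L → PauliOp) :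
    commCoef h B
      = (1 - (-1) ^ #{p | ¬ (h p).Commutes (B p)}) * ∏ p, phase (h p) (B p) := by
  simp_rw [commCoef, phase_swap (h _), Finset.prod_mul_distrib, Finset.prod_ite,
    Finset.prod_const_one, Finset.prod_const, one_mul, sub_mul, one_mul]

lemma commCoef_eq_zero_of_forall_commutes {h B : Site L → PauliOp}
    (hc : ∀ p, (h p).Commutes (B p)) : commCoef h B = 0 := by
  simp [commCoef_eq, hc]

lemma commCoef_ne_zero_of_unique {h B : Site L → PauliOp} {a : Site L}
    (ha : ¬ (h a).Commutes (B a)) (hc : ∀ p ≠ a, (h p).Commutes (B p)) :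
    commCoef h B ≠ 0 := by
  have hcard : #{p | ¬ (h p).Commutes (B p)} = 1 := by
    rw [Finset.card_eq_one]
    refine ⟨a, Finset.eq_singleton_iff_unique_mem.2 ⟨by simpa using ha, fun p hp => ?_⟩⟩
    by_contra hpa
    exact (Finset.mem_filter.1 hp).2 (hc p hpa)
  rw [commCoef_eq, hcard]
  exact mul_ne_zero (by norm_num) (Finset.prod_ne_zero_iff.2 fun p _ => phase_ne_zero _ _)

lemma trace_pauliProd_mul (Q : Matrix (Site L → Fin 2) (Site L → Fin 2) ℂ)
    (C : Site L → PauliOp) :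
    Matrix.trace (pauliProd C * Q) = 2 ^ Fintype.card (Site L) * coeff Q C := by
  rw [coeff, mul_div_cancel₀ _ (pow_ne_zero _ two_ne_zero)]

/-- `Tr ([σ_h, σ_B] Q) / 2 ^ |Λ|`. -/
noncomputable def commTerm (Q : Matrix (Site L → Fin 2) (Site L → Fin 2) ℂ)
    (B h : Site L → PauliOp) : ℂ :=
  commCoef h B * coeff Q (h * B)

lemma trace_pauliProd_mul_commutator (Q : Matrix (Site L → Fin 2) (Site L → Fin 2) ℂ)
    (B h : Site L → PauliOp) :
    Matrix.trace (pauliProd h * (pauliProd B * Q - Q * pauliProd B))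
      = 2 ^ Fintype.card (Site L) * commTerm Q B h := by
  calc Matrix.trace (pauliProd h * (pauliProd B * Q - Q * pauliProd B))
      = Matrix.trace (pauliProd h * pauliProd B * Q)
          - Matrix.trace (pauliProd B * pauliProd h * Q) := by
        rw [Matrix.mul_sub, Matrix.trace_sub, ← Matrix.mul_assoc, ← Matrix.mul_assoc,
          Matrix.trace_mul_cycle (pauliProd h) Q]
    _ = Matrix.trace ((pauliProd h * pauliProd B - pauliProd B * pauliProd h) * Q) := by
        rw [Matrix.sub_mul, Matrix.trace_sub]
    _ = 2 ^ Fintype.card (Site L) * commTerm Q B h := by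
        rw [pauliProd_commutator, Matrix.smul_mul, Matrix.trace_smul, trace_pauliProd_mul,
          commTerm, smul_eq_mul]
        ring

/-- `0 = Tr (σ_B [Q, H])`, expanded over the terms of `H`. -/
lemma sum_commTerm_eq_zero {J1 J2 hx hz : ℝ} {Q : Matrix (Site L → Fin 2) (Site L → Fin 2) ℂ}
    (hcomm : Q * ham J1 J2 hx hz = ham J1 J2 hx hz * Q) (B : Site L → PauliOp) :
    ∑ r : Site L,
      ((J1 : ℂ) * commTerm Q B (twoSiteZZ r (r.1 + 1, r.2))
        + (J2 : ℂ) * commTerm Q B (twoSiteZZ r (r.1, r.2 + 1))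
        + (hx : ℂ) * commTerm Q B (singleSite r X)
        + (hz : ℂ) * commTerm Q B (singleSite r Z)) = 0 := by
  have hH : Matrix.trace (ham J1 J2 hx hz * (pauliProd B * Q - Q * pauliProd B)) = 0 := by
    rw [Matrix.mul_sub, Matrix.trace_sub, ← Matrix.mul_assoc, ← Matrix.mul_assoc,
      Matrix.trace_mul_cycle, hcomm, sub_self]
  simp only [ham, Finset.sum_mul, Matrix.add_mul, Matrix.smul_mul, Matrix.trace_sum,
    Matrix.trace_add, Matrix.trace_smul, trace_pauliProd_mul_commutator, smul_eq_mul,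
    mul_left_comm _ ((2 : ℂ) ^ _), ← mul_add, ← Finset.mul_sum] at hH
  exact (mul_eq_zero.1 hH).resolve_left (pow_ne_zero _ two_ne_zero)

lemma IsCandidate.coeff_eq_zero_of_fst_add_eq {J1 J2 hx hz : ℝ} {k : ℕ}
    {Q : Matrix (Site L → Fin 2) (Site L → Fin 2) ℂ} (hQ : IsCandidate J1 J2 hx hz k Q)
    (hkL : 2 * k ≤ L) {C : Site L → PauliOp} {u v : Site L} (hu : C u ≠ I) (hv : C v ≠ I)
    (huv : u.1 + k = v.1) : coeff Q C = 0 := by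
  by_contra hC
  obtain ⟨ℓ₁, ℓ₂, hℓ₁, -, r, hr⟩ := hQ.2 C hC
  exact hr.fst_add_ne hℓ₁ (by omega) hu hv huv

lemma commTerm_eq_zero_of_commutes {Q : Matrix (Site L → Fin 2) (Site L → Fin 2) ℂ}
    {B h : Site L → PauliOp} (hc : ∀ p, (h p).Commutes (B p)) : commTerm Q B h = 0 := by
  rw [commTerm, commCoef_eq_zero_of_forall_commutes hc, zero_mul]

section LocalTerms

variable {J1 J2 hx hz : ℝ} {k₁ : ℕ} {Q : Matrix (Site L → Fin 2) (Site L → Fin 2) ℂ}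
  {B : Site L → PauliOp} {u f : Site L}

lemma commTerm_eq_zero_of_ne (hQ : IsCandidate J1 J2 hx hz k₁ Q) (hkL : 2 * k₁ ≤ L)
    (huf : u.1 + k₁ = f.1) (hBu : B u = Z) {h : Site L → PauliOp} (hu : h u ≠ Z)
    (hf : h f ≠ B f) : commTerm Q B h = 0 := by
  rw [commTerm, hQ.coeff_eq_zero_of_fst_add_eq hkL (u := u) (v := f) ?_ ?_ huf, mul_zero]
  · rwa [Pi.mul_apply, hBu, Ne, mul_eq_I_iff]
  · rwa [Pi.mul_apply, Ne, mul_eq_I_iff]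

lemma commTerm_singleSite_X_eq_zero (hQ : IsCandidate J1 J2 hx hz k₁ Q) (hkL : 2 * k₁ ≤ L)
    (huf : u.1 + k₁ = f.1) (hBu : B u = Z) (hBf : B f = X ∨ B f = Y) (r : Site L) :
    commTerm Q B (singleSite r X) = 0 := by
  by_cases hfr : f = r ∧ B f = X
  · refine commTerm_eq_zero_of_commutes fun p => ?_
    by_cases hp : p = r
    · simp [singleSite, hp, ← hfr.1, hfr.2, Commutes]
    · simp [singleSite, hp, Commutes]
  · refine commTerm_eq_zero_of_ne hQ hkL huf hBu ?_ ?_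
    · unfold singleSite; split_ifs <;> simp
    · unfold singleSite
      split_ifs with h
      · exact fun hX => hfr ⟨h, hX.symm⟩
      · rcases hBf with h | h <;> simp [h]

lemma commTerm_singleSite_Z_eq_zero (hQ : IsCandidate J1 J2 hx hz k₁ Q) (hkL : 2 * k₁ ≤ L)
    (huf : u.1 + k₁ = f.1) (hBu : B u = Z) (hBf : B f = X ∨ B f = Y) (r : Site L) :
    commTerm Q B (singleSite r Z) = 0 := by
  by_cases hur : u = r
  · refine commTerm_eq_zero_of_commutes fun p => ?_
    by_cases hp : p = r
    · simp [singleSite, hp, ← hur, hBu, Commutes]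
    · simp [singleSite, hp, Commutes]
  · refine commTerm_eq_zero_of_ne hQ hkL huf hBu (by simp [singleSite, hur]) ?_
    unfold singleSite; split_ifs <;> rcases hBf with h | h <;> simp [h]

lemma commTerm_twoSiteZZ_eq_zero (hQ : IsCandidate J1 J2 hx hz k₁ Q) (hkL : 2 * k₁ ≤ L)
    (huf : u.1 + k₁ = f.1) (hBu : B u = Z) (hBf : B f = X ∨ B f = Y) {a b : Site L}
    (hab : u = a ∨ u = b → (B a = Z ∨ B a = I) ∧ (B b = Z ∨ B b = I)) :
    commTerm Q B (twoSiteZZ a b) = 0 := by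
  by_cases hu : u = a ∨ u = b
  · refine commTerm_eq_zero_of_commutes fun p => ?_
    by_cases hp : p = a ∨ p = b
    · rw [twoSiteZZ, if_pos hp]
      rcases hp with rfl | rfl
      exacts [commutes_of_ZI (Or.inl rfl) (hab hu).1, commutes_of_ZI (Or.inl rfl) (hab hu).2]
    · simp [twoSiteZZ, hp, Commutes]
  · refine commTerm_eq_zero_of_ne hQ hkL huf hBu (by simp [twoSiteZZ, hu]) ?_
    unfold twoSiteZZ; split_ifs <;> rcases hBf with h | h <;> simp [h]

/-- All other terms of `sum_commTerm_eq_zero` vanish. -/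
lemma mul_commTerm_bond_eq_zero (hQ : IsCandidate J1 J2 hx hz k₁ Q) (hkL : 2 * k₁ ≤ L)
    (huf : u.1 + k₁ = f.1) (hBu : B u = Z) (hBf : B f = X ∨ B f = Y)
    (hB : ∀ q : Site L, q.1 = u.1 ∨ q.1 + 1 = u.1 → B q = Z ∨ B q = I) :
    (J1 : ℂ) * commTerm Q B (twoSiteZZ u (u.1 + 1, u.2)) = 0 := by
  have horizontal (r : Site L) : commTerm Q B (twoSiteZZ r (r.1, r.2 + 1)) = 0 :=
    commTerm_twoSiteZZ_eq_zero hQ hkL huf hBu hBf fun hu => by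
      have hr : r.1 = u.1 := by rcases hu with rfl | rfl <;> rfl
      exact ⟨hB r (Or.inl hr), hB _ (Or.inl hr)⟩
  have vertical (r : Site L) (hr : r ≠ u) : commTerm Q B (twoSiteZZ r (r.1 + 1, r.2)) = 0 :=
    commTerm_twoSiteZZ_eq_zero hQ hkL huf hBu hBf fun hu => by
      rcases hu with rfl | rfl
      · exact absurd rfl hr
      · exact ⟨hB r (Or.inr rfl), Or.inl hBu⟩
  have hsum := sum_commTerm_eq_zero hQ.1 B
  rw [Finset.sum_eq_single u (fun r _ hr => by
      rw [vertical r hr, horizontal, commTerm_singleSite_X_eq_zero hQ hkL huf hBu hBf,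
        commTerm_singleSite_Z_eq_zero hQ hkL huf hBu hBf]; ring) (by simp)] at hsum
  simpa only [horizontal, commTerm_singleSite_X_eq_zero hQ hkL huf hBu hBf,
    commTerm_singleSite_Z_eq_zero hQ hkL huf hBu hBf, mul_zero, add_zero] using hsum

end LocalTerms

lemma coeff_eq_zero_of_bond {J1 J2 hx hz : ℝ} {k₁ : ℕ}
    {Q : Matrix (Site L → Fin 2) (Site L → Fin 2) ℂ} (hQ : IsCandidate J1 J2 hx hz k₁ Q)
    (hJ1 : J1 ≠ 0) (hkL : 2 * k₁ ≤ L) {A : Site L → PauliOp} {u f : Site L}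
    (huf : u.1 + k₁ = f.1) (hA : ∀ q : Site L, q.1 = u.1 ∨ q.1 + 1 = u.1 → A q = I)
    (hp : A (u.1 + 1, u.2) = X ∨ A (u.1 + 1, u.2) = Y) (hf : A f = X ∨ A f = Y)
    (hfp : f ≠ (u.1 + 1, u.2)) : coeff Q A = 0 := by
  set p : Site L := (u.1 + 1, u.2)
  set B := twoSiteZZ u p * A
  have hAu : A u = I := hA u (Or.inl rfl)
  have hfu : f ≠ u := fun h => by rcases hf with hf | hf <;> simp [h, hAu] at hf
  have hBu : B u = Z := by simp [B, twoSiteZZ, hAu]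
  have hBp : B p = X ∨ B p = Y := by
    rcases hp with hp | hp <;> simp [B, twoSiteZZ, hp] <;> rfl
  have hBf : B f = X ∨ B f = Y := by simpa [B, twoSiteZZ, hfu, hfp] using hf
  have hB (q : Site L) (hq : q.1 = u.1 ∨ q.1 + 1 = u.1) : B q = Z ∨ B q = I := by
    simp only [B, Pi.mul_apply, hA q hq, mul_I, twoSiteZZ]
    split_ifs <;> simp
  have hcomm : commCoef (twoSiteZZ u p) B ≠ 0 := by
    refine commCoef_ne_zero_of_unique (a := p) (by simpa [twoSiteZZ] using not_Z_commutes hBp)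
      fun q hq => ?_
    by_cases hqu : q = u
    · simp [twoSiteZZ, hqu, hBu, Commutes]
    · simp [twoSiteZZ, hqu, hq, Commutes]
  have hterm := mul_commTerm_bond_eq_zero hQ hkL huf hBu hBf hB
  rw [commTerm, show twoSiteZZ u p * B = A by funext q; simp [B]] at hterm
  exact (mul_eq_zero.1 ((mul_eq_zero.1 hterm).resolve_left (by exact_mod_cast hJ1))).resolve_left
    hcomm

theorem prop_type_i_general (L : ℕ) [NeZero L] (J1 J2 hx hz : ℝ) (hJ1 : J1 ≠ 0)
    (k₁ : ℕ) (hk₁ : 2 ≤ k₁) (hk₁L : 2 * k₁ ≤ L)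
    (Q : Matrix (Site L → Fin 2) (Site L → Fin 2) ℂ)
    (hQ : IsCandidate J1 J2 hx hz k₁ Q)
    (ℓ₂ : ℕ)
    (A : Site L → PauliOp) (r : Site L)
    (hsupp : IsSupportedAt A r k₁ ℓ₂)
    (hup : HasXYOn A (upperEdge r)) (hlow : HasXYOn A (lowerEdge r k₁)) :
    coeff Q A = 0 := by
  obtain ⟨p, hp1, hpXY⟩ := hup
  obtain ⟨f, hf1, hfXY⟩ := hlow
  have hf1' : f.1 = r.1 + ((k₁ - 1 : ℕ) : ZMod L) := hf1
  have hp : ((r.1 - 1 + 1 : ZMod L), p.2) = p := Prod.ext (by simp [hp1, upperEdge]) rfl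
  refine coeff_eq_zero_of_bond (u := (r.1 - 1, p.2)) hQ hJ1 hk₁L ?_ ?_ (hp ▸ hpXY) hfXY
    (hp ▸ ?_)
  · rw [hf1', Nat.cast_sub (by omega)]
    ring
  · rintro q (hq | hq)
    · exact hsupp.apply_eq_I (m := 1) one_pos (by omega) (by simp [hq])
    · exact hsupp.apply_eq_I (m := 2) two_pos (by omega) (by linear_combination hq)
  · rintro rfl
    have hcast : ((k₁ - 1 : ℕ) : ZMod L) = ((0 : ℕ) : ZMod L) := by
      simpa [hp1, upperEdge] using hf1'.symm
    have := natCast_eq_natCast_of_lt (by omega) (by omega) hcast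
    omega

/-- **Proposition 1** (type-i inputs). Assume `J¹ ≠ 0`. For `2 ≤ k₁` with `2·k₁ ≤ L`
and any `k₁`-candidate `Q`, the coefficient of `Q` vanishes on every `(k₁,ℓ₂)`-support
Pauli product that contains `X` or `Y` on both its upper and lower edges. -/
theorem prop_type_i (L : ℕ) [NeZero L] (J1 J2 hx hz : ℝ) (hJ1 : J1 ≠ 0)
    (k₁ : ℕ) (hk₁ : 2 ≤ k₁) (hk₁L : 2 * k₁ ≤ L)
    (Q : Matrix (Site L → Fin 2) (Site L → Fin 2) ℂ)
    (hQ : IsCandidate J1 J2 hx hz k₁ Q)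
    (ℓ₂ : ℕ) (hℓ₂1 : 1 ≤ ℓ₂) (hℓ₂L : ℓ₂ ≤ L)
    (A : Site L → PauliOp) (r : Site L)
    (hsupp : IsSupportedAt A r k₁ ℓ₂)
    (hup : HasXYOn A (upperEdge r)) (hlow : HasXYOn A (lowerEdge r k₁)) :
    coeff Q A = 0 :=
  prop_type_i_general L J1 J2 hx hz hJ1 k₁ hk₁ hk₁L Q hQ ℓ₂ A r hsupp hup hlow

end Ising2D
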